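/- Let Y be a measurable space, π₀ a probability measure on Y, and r : Y → ℝ measurable, with π₀ a continuous model for r. Let β > 0, let Φ : [0,1] → ℝ be bounded measurable, set C := C_{r,π₀}, Z := ∫₀¹ e^{Φ(u)/β} du, and let π* be the probability measure with density y ↦ e^{Φ(C(y))/β}/Z with respect to π₀. Then the Kullback–Leibler divergence satisfies KL(π* ‖ π₀) = (1/β)·(∫₀¹ Φ(u)·e^{Φ(u)/β} du)/(∫₀¹ e^{Φ(u)/β} du) − log(∫₀¹ e^{Φ(u)/β} du); in particular it depends only on Φ and β, not on r or π₀. -/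

import Mathlib

/-!
Write `F` for the CDF of the law `r_* π₀`. Since that law has no atoms, `F` is continuous and
`C = F ∘ r`, so `C_* π₀` is the uniform distribution on `(0, 1]` (probability integral transform).
The KL divergence of `π₀.withDensity g` is `∫ g log g dπ₀`, and for `g = G ∘ C` with
`G = e^{Φ/β} / Z` this becomes `∫₀¹ G log G`, which is computed directly from `log G = Φ/β - log Z`.
-/

open MeasureTheory ProbabilityTheory Set Filter Topology Real

namespace ProbabilityTheory

variable (μ : Measure ℝ) [IsProbabilityMeasure μ] [NullSingletonClass μ]

lemma continuous_cdf : Continuous (cdf μ) := by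
  refine continuous_iff_continuousAt.2 fun x => ?_
  have hjump : ENNReal.ofReal (cdf μ x - Function.leftLim (cdf μ) x) = 0 := by
    rw [← StieltjesFunction.measure_singleton, measure_cdf, measure_singleton]
  have hleft : Function.leftLim (cdf μ) x = cdf μ x :=
    le_antisymm ((monotone_cdf μ).leftLim_le le_rfl)
      (sub_nonpos.1 (ENNReal.ofReal_eq_zero.1 hjump))
  rw [(monotone_cdf μ).continuousAt_iff_leftLim_eq_rightLim, hleft, StieltjesFunction.rightLim_eq]

lemma measure_setOf_cdf_le {u : ℝ} (hu0 : 0 ≤ u) (hu1 : u < 1) :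
    μ {t | cdf μ t ≤ u} = ENNReal.ofReal u := by
  set S := {t | cdf μ t ≤ u}
  obtain ⟨b, hb⟩ := ((tendsto_cdf_atTop μ).eventually (lt_mem_nhds hu1)).exists_forall_of_atTop
  have hbdd : BddAbove S := ⟨b, fun t ht => not_lt.1 fun hbt => (hb t hbt.le).not_ge ht⟩
  rcases S.eq_empty_or_nonempty with hS | hS
  · obtain rfl : u = 0 := by
      refine le_antisymm (not_lt.1 fun hu => ?_) hu0
      obtain ⟨t, ht⟩ := ((tendsto_cdf_atBot μ).eventually (gt_mem_nhds hu)).exists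
      exact hS.subset (show t ∈ S from ht.le)
    simp [hS]
  set t₀ := sSup S
  have hclosed : IsClosed S := isClosed_le (continuous_cdf μ) continuous_const
  have hS_eq : S = Iic t₀ := Subset.antisymm (fun t ht => le_csSup hbdd ht)
    fun t ht => le_trans (monotone_cdf μ ht) (hclosed.csSup_mem hS hbdd)
  have hcdf : cdf μ t₀ = u := by
    refine le_antisymm (hclosed.csSup_mem hS hbdd) (ge_of_tendsto
      ((continuous_cdf μ).continuousAt.tendsto.mono_left (nhdsWithin_le_nhds (s := Ioi t₀))) ?_)
    filter_upwards [self_mem_nhdsWithin] with t (ht : t₀ < t)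
    exact le_of_lt (not_le.1 fun h => ht.not_ge (le_csSup hbdd h))
  rw [hS_eq, ← ofReal_cdf, hcdf]

lemma map_cdf_eq_restrict_Ioc : μ.map (cdf μ) = volume.restrict (Ioc 0 1) := by
  have hmeas : Measurable (cdf μ) := (monotone_cdf μ).measurable
  have := Measure.isProbabilityMeasure_map (μ := μ) hmeas.aemeasurable
  refine Measure.ext_of_Iic _ _ fun u => ?_
  rw [Measure.map_apply hmeas measurableSet_Iic, Measure.restrict_apply measurableSet_Iic]
  rcases lt_or_ge u 0 with hu0 | hu0
  · have h1 : cdf μ ⁻¹' Iic u = ∅ := eq_empty_of_forall_notMem fun t ht =>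
      hu0.not_ge ((cdf_nonneg μ t).trans ht)
    have h2 : Iic u ∩ Ioc 0 1 = ∅ := eq_empty_of_forall_notMem fun t ht =>
      hu0.not_ge (ht.2.1.le.trans ht.1)
    rw [h1, h2, measure_empty, measure_empty]
  rcases lt_or_ge u 1 with hu1 | hu1
  · rw [show cdf μ ⁻¹' Iic u = {t | cdf μ t ≤ u} from rfl, measure_setOf_cdf_le μ hu0 hu1,
      Iic_inter_Ioc_of_le hu1.le, Real.volume_Ioc, sub_zero]
  · have h1 : cdf μ ⁻¹' Iic u = univ := eq_univ_of_forall fun t => (cdf_le_one μ t).trans hu1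
    rw [h1, measure_univ, inter_eq_right.2 fun t ht => ht.2.trans hu1, Real.volume_Ioc]
    simp

end ProbabilityTheory

noncomputable def calibratedReward {Y : Type*} [MeasurableSpace Y] (μ : Measure Y) (r : Y → ℝ)
    (y : Y) : ℝ :=
  (μ {z | r z < r y}).toReal + 1 / 2 * (μ {z | r z = r y}).toReal

section CalibratedReward

variable {Y : Type*} [MeasurableSpace Y] {μ : Measure Y} {r : Y → ℝ}

lemma nullSingletonClass_map (hr : Measurable r) (hcont : ∀ t, μ {z | r z = t} = 0) :
    NullSingletonClass (μ.map r) :=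
  ⟨fun t => by rw [Measure.map_apply hr (measurableSet_singleton t)]; exact hcont t⟩

variable [IsProbabilityMeasure μ]

lemma calibratedReward_eq_cdf_comp (hr : Measurable r) (hcont : ∀ t, μ {z | r z = t} = 0) :
    calibratedReward μ r = cdf (μ.map r) ∘ r := by
  have := Measure.isProbabilityMeasure_map (μ := μ) hr.aemeasurable
  have := nullSingletonClass_map hr hcont
  funext y
  rw [calibratedReward, hcont, Function.comp_apply, cdf_eq_real, measureReal_def,
    ← measure_congr Iio_ae_eq_Iic, Measure.map_apply hr measurableSet_Iio]
  simp only [ENNReal.toReal_zero, mul_zero, add_zero]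
  rfl

lemma measurable_calibratedReward (hr : Measurable r) (hcont : ∀ t, μ {z | r z = t} = 0) :
    Measurable (calibratedReward μ r) :=
  calibratedReward_eq_cdf_comp hr hcont ▸ (monotone_cdf _).measurable.comp hr

lemma map_calibratedReward (hr : Measurable r) (hcont : ∀ t, μ {z | r z = t} = 0) :
    μ.map (calibratedReward μ r) = volume.restrict (Ioc 0 1) := by
  have := Measure.isProbabilityMeasure_map (μ := μ) hr.aemeasurable
  have := nullSingletonClass_map hr hcont
  rw [calibratedReward_eq_cdf_comp hr hcont, ← Measure.map_map (monotone_cdf _).measurable hr,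
    map_cdf_eq_restrict_Ioc]

end CalibratedReward

lemma integral_log_rnDeriv_withDensity {Y : Type*} [MeasurableSpace Y] (ν : Measure Y)
    [SigmaFinite ν] {g : Y → ℝ} (hg : Measurable g) (hg0 : ∀ y, 0 ≤ g y) :
    ∫ y, log ((ν.withDensity fun y => ENNReal.ofReal (g y)).rnDeriv ν y).toReal
        ∂(ν.withDensity fun y => ENNReal.ofReal (g y))
      = ∫ y, g y * log (g y) ∂ν := by
  have hrn := (Measure.rnDeriv_withDensity ν hg.ennreal_ofReal).filter_mono
    (withDensity_absolutelyContinuous ν fun y => ENNReal.ofReal (g y)).ae_le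
  rw [integral_congr_ae (hrn.mono fun y hy => by rw [hy]),
    integral_withDensity_eq_integral_toReal_smul hg.ennreal_ofReal
      (ae_of_all _ fun _ => ENNReal.ofReal_lt_top)]
  simp only [ENNReal.toReal_ofReal (hg0 _), smul_eq_mul]

lemma integral_exp_div_mul_log_exp_div {α : Type*} [MeasurableSpace α] {ρ : Measure α}
    {f : α → ℝ} (hexp : Integrable (fun u => exp (f u)) ρ)
    (hmul : Integrable (fun u => f u * exp (f u)) ρ) :
    ∫ u, exp (f u) / (∫ v, exp (f v) ∂ρ) * log (exp (f u) / ∫ v, exp (f v) ∂ρ) ∂ρ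
      = (∫ u, f u * exp (f u) ∂ρ) / (∫ v, exp (f v) ∂ρ) - log (∫ v, exp (f v) ∂ρ) := by
  set Z := ∫ v, exp (f v) ∂ρ
  have hpointwise : ∀ u, exp (f u) / Z * log (exp (f u) / Z)
      = Z⁻¹ * (f u * exp (f u)) - (log Z / Z) * exp (f u) := by
    intro u
    -- for `Z = 0` both sides vanish, as `x / 0 = 0` and `log 0 = 0`
    rcases eq_or_ne Z 0 with hZ | hZ
    · simp [hZ]
    rw [log_div (exp_ne_zero _) hZ, log_exp]
    ring
  simp_rw [hpointwise]
  rw [integral_sub (hmul.const_mul _) (hexp.const_mul _), integral_const_mul, integral_const_mul,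
    div_mul_cancel_of_imp fun hZ => by rw [hZ, log_zero]]
  ring

lemma integrable_comp_of_abs_le {α : Type*} [MeasurableSpace α] {ρ : Measure α}
    [IsFiniteMeasure ρ] {h : ℝ → ℝ} (hh : Continuous h) {f : α → ℝ} (hf : Measurable f) {M : ℝ}
    (hfM : ∀ᵐ x ∂ρ, |f x| ≤ M) : Integrable (fun x => h (f x)) ρ := by
  obtain ⟨B, hB⟩ := (isCompact_Icc (a := -M) (b := M)).exists_bound_of_continuousOn
    hh.continuousOn
  exact Integrable.of_bound (hh.measurable.comp hf).aestronglyMeasurable B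
    (hfM.mono fun x hx => hB _ (abs_le.1 hx))

theorem stmt_12_general {Y : Type*} [MeasurableSpace Y]
    (π₀ : Measure Y) [IsProbabilityMeasure π₀]
    (r : Y → ℝ) (hr : Measurable r)
    (hcont : ∀ t : ℝ, π₀ {z | r z = t} = 0)
    (β : ℝ)
    (Φ : ℝ → ℝ) (hΦm : Measurable Φ)
    (hΦb : ∃ M, ∀ u ∈ Set.Icc (0 : ℝ) 1, |Φ u| ≤ M)
    (C : Y → ℝ)
    (hC : ∀ y, C y = (π₀ {z | r z < r y}).toReal + (1 / 2) * (π₀ {z | r z = r y}).toReal)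
    (Z : ℝ) (hZ : Z = ∫ u in (0 : ℝ)..1, Real.exp (Φ u / β))
    (πstar : Measure Y)
    (hπstar : πstar = π₀.withDensity fun y => ENNReal.ofReal (Real.exp (Φ (C y) / β) / Z)) :
    (∫ y, Real.log (πstar.rnDeriv π₀ y).toReal ∂πstar)
      = (1 / β) * ((∫ u in (0 : ℝ)..1, Φ u * Real.exp (Φ u / β))
            / ∫ u in (0 : ℝ)..1, Real.exp (Φ u / β))
        - Real.log (∫ u in (0 : ℝ)..1, Real.exp (Φ u / β)) := by
  have hC_eq : C = calibratedReward π₀ r := funext hC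
  have hC_meas : Measurable C := hC_eq ▸ measurable_calibratedReward hr hcont
  have hC_map : π₀.map C = volume.restrict (Ioc 0 1) := hC_eq ▸ map_calibratedReward hr hcont
  obtain ⟨M, hM⟩ := hΦb
  have hfM : ∀ᵐ u ∂volume.restrict (Ioc 0 1), |Φ u / β| ≤ M / |β| := by
    filter_upwards [ae_restrict_mem measurableSet_Ioc] with u hu
    rw [abs_div]
    exact div_le_div_of_nonneg_right (hM u (Ioc_subset_Icc_self hu)) (abs_nonneg β)
  have hf_meas : Measurable fun u => Φ u / β := hΦm.div_const β
  rw [intervalIntegral.integral_of_le zero_le_one] at hZ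
  have hZ0 : 0 ≤ Z := hZ ▸ integral_nonneg fun _ => (exp_pos _).le
  set G : ℝ → ℝ := fun u => exp (Φ u / β) / Z
  have hG_meas : Measurable G := (measurable_exp.comp hf_meas).div_const Z
  calc (∫ y, log (πstar.rnDeriv π₀ y).toReal ∂πstar)
      = ∫ y, G (C y) * log (G (C y)) ∂π₀ := by
        rw [hπstar]
        exact integral_log_rnDeriv_withDensity π₀ (hG_meas.comp hC_meas)
          fun _ => div_nonneg (exp_pos _).le hZ0
    _ = ∫ u in Ioc 0 1, G u * log (G u) := by
        rw [← hC_map, integral_map (f := fun u => G u * log (G u)) hC_meas.aemeasurable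
          (hG_meas.mul (measurable_log.comp hG_meas)).aestronglyMeasurable]
    _ = (∫ u in Ioc 0 1, Φ u / β * exp (Φ u / β)) / Z - log Z := by
        simp only [G, hZ]
        exact integral_exp_div_mul_log_exp_div
          (integrable_comp_of_abs_le continuous_exp hf_meas hfM)
          (integrable_comp_of_abs_le (continuous_id.mul continuous_exp) hf_meas hfM)
    _ = _ := by
        simp_rw [intervalIntegral.integral_of_le zero_le_one, ← hZ, div_mul_eq_mul_div,
          div_eq_inv_mul _ β, integral_const_mul]
        ring

/-- In the setting of Statement 10, the KL divergence
`KL(π*‖π₀) = ∫ log(dπ*/dπ₀) dπ*` equals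
`(1/β)·(∫₀¹ Φ(u)e^{Φ(u)/β} du)/(∫₀¹ e^{Φ(u)/β} du) − log ∫₀¹ e^{Φ(u)/β} du`;
in particular it depends only on `Φ` and `β`. -/
theorem stmt_12 {Y : Type*} [MeasurableSpace Y]
    (π₀ : Measure Y) [IsProbabilityMeasure π₀]
    (r : Y → ℝ) (hr : Measurable r)
    (hcont : ∀ t : ℝ, π₀ {z | r z = t} = 0)
    (β : ℝ) (hβ : 0 < β)
    (Φ : ℝ → ℝ) (hΦm : Measurable Φ)
    (hΦb : ∃ M, ∀ u ∈ Set.Icc (0 : ℝ) 1, |Φ u| ≤ M)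
    (C : Y → ℝ)
    (hC : ∀ y, C y = (π₀ {z | r z < r y}).toReal + (1 / 2) * (π₀ {z | r z = r y}).toReal)
    (Z : ℝ) (hZ : Z = ∫ u in (0 : ℝ)..1, Real.exp (Φ u / β))
    (πstar : Measure Y)
    (hπstar : πstar = π₀.withDensity fun y => ENNReal.ofReal (Real.exp (Φ (C y) / β) / Z)) :
    (∫ y, Real.log (πstar.rnDeriv π₀ y).toReal ∂πstar)
      = (1 / β) * ((∫ u in (0 : ℝ)..1, Φ u * Real.exp (Φ u / β))
            / ∫ u in (0 : ℝ)..1, Real.exp (Φ u / β))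
        - Real.log (∫ u in (0 : ℝ)..1, Real.exp (Φ u / β)) :=
  stmt_12_general π₀ r hr hcont β Φ hΦm hΦb C hC Z hZ πstar hπstar
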